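/- arXiv:1401.3367 — 2 statements merged into one kernel-verified Lean document; each statement's English description precedes it below -/
import Mathlib

section
/- Let λ^t be an unrepeated elementary divisor of f (d(f,t) = 1) and let u be a generator of V with e(u) = t. Then for every j with 0 ≤ j ≤ t, the characteristic hull of f^j(u) satisfies ⟨f^j(u)⟩^c = f^j(V) ∩ ker(f^{t−j}), and in particular ⟨f^j(u)⟩^c is hyperinvariant. -/
/-!
Split `V = ⟨u⟩ ⊕ V₂`. Since `f ^ t u = 0` and `f ^ (t - 1) u ≠ 0`, the polynomials annihilating
`u` are the multiples of `X ^ t`, so for every `w ∈ V₂` with `f ^ t w = 0` the assignment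
`p(f) u ↦ p(f) w` is a well-defined map on `⟨u⟩`. Extended by `0` on `V₂` it is a square-zero
endomorphism `g` commuting with `f`, and `α = 1 + g` is an automorphism commuting with `f` with
`α u = u + w`. Now take `f ^ j y` with `f ^ t y = 0` and split `y = c + w`: then `f ^ t w = 0`,
`f ^ j c ∈ ⟨f ^ j u⟩` and `f ^ j w = α (f ^ j u) - f ^ j u`, so `f ^ j y` lies in the hull. The
reverse inclusion holds because `f ^ j V ∩ ker f ^ (t - j)` is hyperinvariant.
-/

open Module LinearMap

section Defs

variable {K V : Type*} [Field K] [AddCommGroup V] [Module K V]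

/-- `α` commutes with `f`. -/
def Commutes (f : V →ₗ[K] V) (α : V ≃ₗ[K] V) : Prop :=
  ∀ v, α (f v) = f (α v)

/-- `X` is hyperinvariant: invariant under every endomorphism commuting with `f`. -/
def Hyperinv (f : V →ₗ[K] V) (X : Submodule K V) : Prop :=
  ∀ g : V →ₗ[K] V, (∀ v, g (f v) = f (g v)) → ∀ x ∈ X, g x ∈ X

/-- `X` is characteristic: `f`-invariant and invariant under every automorphism
commuting with `f`. -/
def Charinv (f : V →ₗ[K] V) (X : Submodule K V) : Prop :=
  (∀ x ∈ X, f x ∈ X) ∧ ∀ α : V ≃ₗ[K] V, Commutes f α → ∀ x ∈ X, α x ∈ X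

/-- The characteristic hull of a set `B`: the subspace spanned by all
`f^i (α b)`, `b ∈ B`, `α` an automorphism commuting with `f`. -/
def charHull (f : V →ₗ[K] V) (B : Set V) : Submodule K V :=
  Submodule.span K
    {y | ∃ b ∈ B, ∃ i : ℕ, ∃ α : V ≃ₗ[K] V, Commutes f α ∧ y = (f ^ i) (α b)}

/-- The `f`-cyclic subspace generated by `x`. -/
def cyc (f : V →ₗ[K] V) (x : V) : Submodule K V :=
  Submodule.span K (Set.range fun i : ℕ => (f ^ i) x)

/-- The `f`-invariant span of a set `B`. -/
def invSpan (f : V →ₗ[K] V) (B : Set V) : Submodule K V :=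
  Submodule.span K {y | ∃ b ∈ B, ∃ i : ℕ, y = (f ^ i) b}

/-- The exponent of `x`: the least `ℓ` with `f^ℓ x = 0`. -/
noncomputable def expnt (f : V →ₗ[K] V) (x : V) : ℕ :=
  sInf {ℓ : ℕ | (f ^ ℓ) x = 0}

/-- The height of `x`: the largest `q` with `x ∈ f^q V`. -/
noncomputable def hgt (f : V →ₗ[K] V) (x : V) : ℕ :=
  sSup {q : ℕ | x ∈ LinearMap.range (f ^ q)}

/-- `u` is a generator of `V`: `V = ⟨u⟩ ⊕ V₂` for some `f`-invariant `V₂`. -/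
def IsGenerator (f : V →ₗ[K] V) (u : V) : Prop :=
  u ≠ 0 ∧ ∃ V₂ : Submodule K V, (∀ x ∈ V₂, f x ∈ V₂) ∧ IsCompl (cyc f u) V₂

/-- `(u 0, …, u (m-1))` is a generator tuple of `V`:
`V = ⟨u 0⟩ ⊕ ⋯ ⊕ ⟨u (m-1)⟩` with nondecreasing exponents. -/
def IsGenTuple {m : ℕ} (f : V →ₗ[K] V) (u : Fin m → V) : Prop :=
  DirectSum.IsInternal (fun i => cyc f (u i)) ∧ Monotone fun i => expnt f (u i)

/-- The Ulm invariant `d(f,r) = dim ((ker f ⊓ f^{r-1} V) / (ker f ⊓ f^r V))`. -/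
noncomputable def ulm (f : V →ₗ[K] V) (r : ℕ) : ℕ :=
  Module.finrank K
    (↥(LinearMap.ker f ⊓ LinearMap.range (f ^ (r - 1))) ⧸
      Submodule.comap (LinearMap.ker f ⊓ LinearMap.range (f ^ (r - 1))).subtype
        (LinearMap.ker f ⊓ LinearMap.range (f ^ r)))

/-- The largest hyperinvariant subspace contained in `X`
(the sum of all hyperinvariant subspaces contained in `X`). -/
noncomputable def largestHyperinv (f : V →ₗ[K] V) (X : Submodule K V) : Submodule K V :=
  sSup {W : Submodule K V | Hyperinv f W ∧ W ≤ X}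

end Defs

open Polynomial

section

variable {K V : Type*} [Field K] [AddCommGroup V] [Module K V]

lemma pow_sub_apply_pow_apply (f : V →ₗ[K] V) {j t : ℕ} (hj : j ≤ t) (x : V) :
    (f ^ (t - j)) ((f ^ j) x) = (f ^ t) x := by
  rw [← Module.End.mul_apply, ← pow_add, Nat.sub_add_cancel hj]

lemma pow_expnt_apply_eq_zero {f : V →ₗ[K] V} {x : V} (h : 0 < expnt f x) :
    (f ^ expnt f x) x = 0 :=
  Nat.sInf_mem (Nat.nonempty_of_pos_sInf h)

lemma pow_apply_ne_zero_of_lt_expnt {f : V →ₗ[K] V} {x : V} {i : ℕ} (h : i < expnt f x) :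
    (f ^ i) x ≠ 0 :=
  Nat.notMem_of_lt_sInf h

noncomputable def aevalApply (f : V →ₗ[K] V) (x : V) : K[X] →ₗ[K] V :=
  LinearMap.applyₗ x ∘ₗ (aeval f).toLinearMap

@[simp]
lemma aevalApply_apply (f : V →ₗ[K] V) (x : V) (p : K[X]) : aevalApply f x p = aeval f p x :=
  rfl

lemma range_aevalApply (f : V →ₗ[K] V) (x : V) : range (aevalApply f x) = cyc f x := by
  rw [range_eq_map, ← (basisMonomials K).span_eq, Submodule.map_span, cyc, ← Set.range_comp]
  congr
  ext i
  simp

lemma X_pow_dvd_of_aeval_apply_eq_zero {f : V →ₗ[K] V} {x : V} {t : ℕ}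
    (hxt : (f ^ t) x = 0) (hx : ∀ i < t, (f ^ i) x ≠ 0) {p : K[X]} (hp : aeval f p x = 0) :
    X ^ t ∣ p := by
  classical
  by_contra hdvd
  have hex : ∃ d, d < t ∧ p.coeff d ≠ 0 := by simpa [X_pow_dvd_iff] using hdvd
  obtain ⟨hdt, hpd⟩ := Nat.find_spec hex
  have hmin : ∀ i < Nat.find hex, p.coeff i = 0 := fun i hi =>
    by_contra fun h => Nat.find_min hex hi ⟨hi.trans hdt, h⟩
  generalize Nat.find hex = d at hdt hpd hmin
  obtain ⟨q, rfl⟩ : X ^ d ∣ p := X_pow_dvd_iff.2 hmin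
  have hq0 : q.coeff 0 ≠ 0 := by simpa [coeff_X_pow_mul'] using hpd
  obtain ⟨r, hr⟩ : X ∣ q - C (q.coeff 0) := X_dvd_iff.2 (by simp)
  generalize q.coeff 0 = c at hq0 hr
  -- multiplying by `X ^ m` moves the lowest term `c X ^ d` of `p` to degree `t - 1` and every
  -- other term to degree `≥ t`, where it kills `x`
  obtain ⟨m, rfl⟩ : ∃ m, t = d + m + 1 := ⟨t - d - 1, by omega⟩
  have hsplit : X ^ m * (X ^ d * q) = C c * X ^ (d + m) + r * X ^ (d + m + 1) := by
    rw [eq_add_of_sub_eq' hr]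
    ring
  have h0 : aeval f (X ^ m * (X ^ d * q)) x = 0 := by
    rw [aeval_mul, Module.End.mul_apply, hp, map_zero]
  rw [hsplit, map_add, map_mul, map_mul, LinearMap.add_apply, Module.End.mul_apply,
    Module.End.mul_apply, aeval_X_pow, aeval_X_pow, hxt, map_zero, add_zero, aeval_C,
    Module.algebraMap_end_apply] at h0
  exact hx (d + m) (by omega) ((smul_eq_zero.1 h0).resolve_left hq0)

lemma ker_aevalApply_le {f : V →ₗ[K] V} {x y : V} {t : ℕ} (hxt : (f ^ t) x = 0)
    (hx : ∀ i < t, (f ^ i) x ≠ 0) (hyt : (f ^ t) y = 0) :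
    ker (aevalApply f x) ≤ ker (aevalApply f y) := by
  intro p hp
  obtain ⟨q, rfl⟩ := X_pow_dvd_of_aeval_apply_eq_zero hxt hx hp
  rw [mem_ker, aevalApply_apply, mul_comm, aeval_mul, Module.End.mul_apply, aeval_X_pow, hyt,
    map_zero]

lemma apply_mem_cyc_of_commute {f g : V →ₗ[K] V} (hg : Commute g f) {u x : V} (hx : x ∈ cyc f u) :
    g x ∈ cyc f (g u) := by
  suffices cyc f u ≤ (cyc f (g u)).comap g from this hx
  rw [cyc, Submodule.span_le]
  rintro _ ⟨i, rfl⟩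
  exact Submodule.subset_span ⟨i, by simp [← Module.End.mul_apply, (hg.pow_right i).eq]⟩

lemma cyc_le_ker_pow {f : V →ₗ[K] V} {x : V} {t : ℕ} (hxt : (f ^ t) x = 0) :
    cyc f x ≤ ker (f ^ t) := by
  rw [cyc, Submodule.span_le]
  rintro _ ⟨i, rfl⟩
  rw [SetLike.mem_coe, mem_ker, ← Module.End.mul_apply, pow_mul_comm, Module.End.mul_apply, hxt,
    map_zero]

lemma exists_commute_apply_eq_of_isCompl {f : V →ₗ[K] V} {u w : V} {N : Submodule K V}
    (hN : ∀ x ∈ N, f x ∈ N) (hc : IsCompl (cyc f u) N) (hw : w ∈ N)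
    (hker : ker (aevalApply f u) ≤ ker (aevalApply f w)) :
    ∃ g : Module.End K V, Commute g f ∧ g u = w ∧ g * g = 0 := by
  rw [← range_aevalApply] at hc
  set P := aevalApply f u
  let ψ : range P →ₗ[K] V :=
    (ker P).liftQ (aevalApply f w) hker ∘ₗ P.quotKerEquivRange.symm.toLinearMap
  let g := ψ ∘ₗ (range P).projectionOnto N hc
  have hgP : ∀ p : K[X], g (aeval f p u) = aeval f p w := fun p => by
    have hπ : (range P).projectionOnto N hc (P p) = ⟨P p, mem_range_self P p⟩ :=
      Submodule.projectionOnto_apply_left hc ⟨P p, mem_range_self P p⟩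
    simp only [g, ψ, LinearMap.comp_apply, LinearEquiv.coe_coe]
    rw [← aevalApply_apply, hπ, quotKerEquivRange_symm_apply_image, Submodule.mkQ_apply,
      Submodule.liftQ_apply, aevalApply_apply]
  have hgN : ∀ x ∈ N, g x = 0 := fun x hx => by
    simp [g, Submodule.projectionOnto_apply_right hc ⟨x, hx⟩]
  have hdecomp : ∀ v, ∃ p : K[X], ∃ n ∈ N, v = aeval f p u + n := by
    intro v
    obtain ⟨_, ⟨p, rfl⟩, n, hn, rfl⟩ :=
      Submodule.mem_sup.1 (hc.sup_eq_top ▸ Submodule.mem_top : v ∈ range P ⊔ N)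
    exact ⟨p, n, hn, rfl⟩
  refine ⟨g, ?_, by simpa using hgP 1, ?_⟩
  · ext v
    obtain ⟨p, n, hn, rfl⟩ := hdecomp v
    have hfp : f (aeval f p u) = aeval f (X * p) u := by
      rw [aeval_mul, aeval_X, Module.End.mul_apply]
    rw [Module.End.mul_apply, Module.End.mul_apply, map_add, map_add, map_add, hfp, hgP, hgP,
      hgN n hn, hgN _ (hN n hn), aeval_mul, aeval_X, Module.End.mul_apply, add_zero, add_zero]
  · ext v
    obtain ⟨p, n, hn, rfl⟩ := hdecomp v
    simp [hgP, hgN n hn, hgN _ (aeval_apply_smul_mem_of_le_comap hw p f hN)]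

lemma exists_commutes_apply_eq_add {f : V →ₗ[K] V} {u w : V} {N : Submodule K V}
    (hN : ∀ x ∈ N, f x ∈ N) (hc : IsCompl (cyc f u) N) (hw : w ∈ N)
    (hker : ker (aevalApply f u) ≤ ker (aevalApply f w)) :
    ∃ α : V ≃ₗ[K] V, Commutes f α ∧ α u = u + w := by
  obtain ⟨g, hgf, hgu, hgg⟩ := exists_commute_apply_eq_of_isCompl hN hc hw hker
  have h₁ : (1 + g) * (1 - g) = 1 := by noncomm_ring; simp [hgg]
  have h₂ : (1 - g) * (1 + g) = 1 := by noncomm_ring; simp [hgg]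
  refine ⟨.ofLinearMap (1 + g) (1 - g) h₁ h₂, fun v => ?_, by simp [hgu]⟩
  simpa using congrArg (· v) ((Commute.one_left f).add_left hgf).eq

lemma Commutes.pow_apply {f : V →ₗ[K] V} {α : V ≃ₗ[K] V} (hα : Commutes f α) (i : ℕ) (v : V) :
    α ((f ^ i) v) = (f ^ i) (α v) :=
  have hα' : Commute (α : Module.End K V) f := LinearMap.ext hα
  LinearMap.congr_fun (hα'.pow_right i).eq v

lemma Hyperinv.charinv {f : V →ₗ[K] V} {X : Submodule K V} (h : Hyperinv f X) : Charinv f X :=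
  ⟨h f fun _ => rfl, fun α hα => h α hα⟩

lemma hyperinv_range_pow_inf_ker_pow (f : V →ₗ[K] V) (a b : ℕ) :
    Hyperinv f (range (f ^ a) ⊓ ker (f ^ b)) := by
  rintro g hg _ ⟨⟨y, rfl⟩, hy⟩
  have hgf : Commute g f := LinearMap.ext hg
  refine ⟨⟨g y, (LinearMap.congr_fun (hgf.pow_right a).eq y).symm⟩, ?_⟩
  rw [SetLike.mem_coe, mem_ker, ← Module.End.mul_apply, ← (hgf.pow_right b).eq,
    Module.End.mul_apply, mem_ker.1 hy, map_zero]

lemma pow_apply_mem_charHull {f : V →ₗ[K] V} {B : Set V} {b : V} (hb : b ∈ B)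
    {α : V ≃ₗ[K] V} (hα : Commutes f α) (i : ℕ) : (f ^ i) (α b) ∈ charHull f B :=
  Submodule.subset_span ⟨b, hb, i, α, hα, rfl⟩

lemma cyc_le_charHull {f : V →ₗ[K] V} {B : Set V} {b : V} (hb : b ∈ B) :
    cyc f b ≤ charHull f B := by
  rw [cyc, Submodule.span_le]
  rintro _ ⟨i, rfl⟩
  simpa using pow_apply_mem_charHull (f := f) hb (α := LinearEquiv.refl K V) (fun _ => rfl) i

lemma charHull_le {f : V →ₗ[K] V} {X : Submodule K V} {B : Set V} (hX : Charinv f X)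
    (hB : B ⊆ X) : charHull f B ≤ X := by
  rw [charHull, Submodule.span_le]
  rintro _ ⟨b, hb, i, α, hα, rfl⟩
  exact X.le_comap_pow_of_le_comap hX.1 i (hX.2 α hα b (hB hb))

lemma range_pow_inf_ker_pow_le_charHull {f : V →ₗ[K] V} {u : V} {t j : ℕ}
    (hu : IsGenerator f u) (hut : (f ^ t) u = 0) (hu' : ∀ i < t, (f ^ i) u ≠ 0) (hj : j ≤ t) :
    range (f ^ j) ⊓ ker (f ^ (t - j)) ≤ charHull f {(f ^ j) u} := by
  rintro _ ⟨⟨y, rfl⟩, hy⟩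
  have hyt : (f ^ t) y = 0 := by rwa [SetLike.mem_coe, mem_ker, pow_sub_apply_pow_apply f hj] at hy
  obtain ⟨-, N, hN, hc⟩ := hu
  obtain ⟨c, hcu, d, hdN, rfl⟩ :=
    Submodule.mem_sup.1 (hc.sup_eq_top ▸ Submodule.mem_top : y ∈ cyc f u ⊔ N)
  have hdt : (f ^ t) d = 0 := by
    rwa [map_add, mem_ker.1 (cyc_le_ker_pow hut hcu), zero_add] at hyt
  obtain ⟨α, hα, hαu⟩ := exists_commutes_apply_eq_add hN hc hdN (ker_aevalApply_le hut hu' hdt)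
  have hd : (f ^ j) d = α ((f ^ j) u) - (f ^ j) u := by
    rw [hα.pow_apply, hαu, map_add, add_sub_cancel_left]
  rw [map_add, hd]
  have hmem := Set.mem_singleton ((f ^ j) u)
  refine add_mem ?_ (sub_mem ?_ ?_)
  · exact cyc_le_charHull hmem (apply_mem_cyc_of_commute ((Commute.refl f).pow_left j) hcu)
  · simpa using pow_apply_mem_charHull hmem hα 0
  · exact cyc_le_charHull hmem (Submodule.subset_span ⟨0, by simp⟩)

end

theorem stmt8_general {K V : Type*} [Field K] [AddCommGroup V] [Module K V]
    (f : V →ₗ[K] V)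
    (t : ℕ) (ht : 1 ≤ t)
    (u : V) (hu : IsGenerator f u) (heu : expnt f u = t)
    (j : ℕ) (hj : j ≤ t) :
    charHull f {(f ^ j) u} = LinearMap.range (f ^ j) ⊓ LinearMap.ker (f ^ (t - j)) ∧
      Hyperinv f (charHull f {(f ^ j) u}) := by
  subst heu
  have hut := pow_expnt_apply_eq_zero ht
  have hhyp := hyperinv_range_pow_inf_ker_pow f j (expnt f u - j)
  have hmem : (f ^ j) u ∈ range (f ^ j) ⊓ ker (f ^ (expnt f u - j)) :=
    ⟨mem_range_self _ u, by rw [SetLike.mem_coe, mem_ker, pow_sub_apply_pow_apply f hj, hut]⟩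
  have hX := le_antisymm (charHull_le hhyp.charinv (Set.singleton_subset_iff.2 hmem))
    (range_pow_inf_ker_pow_le_charHull hu hut (fun _ => pow_apply_ne_zero_of_lt_expnt) hj)
  exact ⟨hX, hX ▸ hhyp⟩

theorem stmt8 {K V : Type*} [Field K] [AddCommGroup V] [Module K V]
    [FiniteDimensional K V] (f : V →ₗ[K] V) (hf : IsNilpotent f)
    (t : ℕ) (ht : 1 ≤ t) (hd : ulm f t = 1)
    (u : V) (hu : IsGenerator f u) (heu : expnt f u = t)
    (j : ℕ) (hj : j ≤ t) :
    charHull f {(f ^ j) u} = LinearMap.range (f ^ j) ⊓ LinearMap.ker (f ^ (t - j)) ∧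
      Hyperinv f (charHull f {(f ^ j) u}) :=
  stmt8_general f t ht u hu heu j hj
end

section
/- Suppose V = ⟨u_1⟩ ⊕ ⟨u_2⟩ with e(u_1) < e(u_2). Then for every x ∈ V there exist a K-linear automorphism α of V commuting with f and nonnegative integers k_1, k_2 such that α(x) = f^{k_1}(u_1) + f^{k_2}(u_2). -/
/-! Write `x = p(f) u₁ + q(f) u₂`. As `f` is nilpotent, splitting off the largest power of `X`
dividing `p` gives `p(f) = g(f) fᵃ` with `g(f)` invertible, and likewise `q(f) = h(f) fᵇ`.
With `π` the projection onto `⟨u₁⟩` along `⟨u₂⟩`, which commutes with `f`, the automorphism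
`g(f)⁻¹ π + h(f)⁻¹ (1 - π)` commutes with `f` and sends `x` to `fᵃ u₁ + fᵇ u₂`. -/

open Module LinearMap

open Polynomial

theorem Commute.aeval_right {R A : Type*} [CommSemiring R] [Semiring A] [Algebra R A] {a b : A}
    (h : Commute a b) (p : R[X]) : Commute a (aeval b p) := by
  induction p using Polynomial.induction_on' with
  | add p q hp hq => simpa using hp.add_right hq
  | monomial n c =>
    simpa [aeval_monomial] using (Algebra.commute_algebraMap_right c a).mul_right (h.pow_right n)

theorem isUnit_aeval_of_isNilpotent {R A : Type*} [CommRing R] [Ring A] [Algebra R A] {a : A}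
    (ha : IsNilpotent a) {p : R[X]} (hp : IsUnit (p.coeff 0)) : IsUnit (aeval a p) := by
  have hsplit : aeval a p = algebraMap R A (p.coeff 0) + a * aeval a p.divX := by
    conv_lhs => rw [← X_mul_divX_add p]
    rw [map_add, map_mul, aeval_X, aeval_C, add_comm]
  rw [hsplit]
  refine IsNilpotent.isUnit_add_left_of_commute ?_ (hp.map _) (Algebra.commutes _ _).symm
  exact ((Commute.refl a).aeval_right p.divX).isNilpotent_mul_right ha

theorem exists_aeval_eq_mul_pow {K A : Type*} [Field K] [Ring A] [Algebra K A] {a : A}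
    (ha : IsNilpotent a) (p : K[X]) :
    ∃ (n : ℕ) (g : K[X]), IsUnit (aeval a g) ∧ aeval a p = aeval a g * a ^ n := by
  obtain ⟨m, hm⟩ := ha
  by_cases hp : p = 0
  · exact ⟨m, 1, by simp, by simp [hp, hm]⟩
  obtain ⟨g, hpg, hg⟩ := p.exists_eq_pow_rootMultiplicity_mul_and_not_dvd hp 0
  simp only [map_zero, sub_zero, X_dvd_iff] at hpg hg
  refine ⟨p.rootMultiplicity 0, g, isUnit_aeval_of_isNilpotent ⟨m, hm⟩ (Ne.isUnit hg), ?_⟩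
  nth_rw 1 [hpg]
  rw [mul_comm, map_mul, aeval_X_pow]

theorem IsIdempotentElem.mul_add_mul_one_sub_mul_inv {R : Type*} [Ring R] {e : R}
    (he : IsIdempotentElem e) {a b : Rˣ} (ha : Commute (a : R) e) (hb : Commute (b : R) e) :
    (a * e + b * (1 - e)) * (↑a⁻¹ * e + ↑b⁻¹ * (1 - e)) = 1 := by
  have ha' : Commute e ↑a⁻¹ := ha.units_inv_left.symm
  have hb' : Commute e ↑b⁻¹ := hb.units_inv_left.symm
  have h0 : e * (1 - e) = 0 := by rw [mul_sub, mul_one, he.eq, sub_self]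
  have h0' : (1 - e) * e = 0 := by rw [sub_mul, one_mul, he.eq, sub_self]
  rw [add_mul, mul_add, mul_add, ha'.mul_mul_mul_comm, hb'.mul_mul_mul_comm,
    ((Commute.one_left _).sub_left ha').mul_mul_mul_comm,
    ((Commute.one_left _).sub_left hb').mul_mul_mul_comm,
    h0, h0', he.eq, he.one_sub.eq]
  simp

theorem IsIdempotentElem.isUnit_mul_add_mul_one_sub {R : Type*} [Ring R] {e a b : R}
    (he : IsIdempotentElem e) (ha : IsUnit a) (hb : IsUnit b) (hae : Commute a e)
    (hbe : Commute b e) : IsUnit (a * e + b * (1 - e)) := by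
  lift a to Rˣ using ha
  lift b to Rˣ using hb
  exact ⟨⟨_, _, he.mul_add_mul_one_sub_mul_inv hae hbe,
    by simpa using he.mul_add_mul_one_sub_mul_inv hae.units_inv_left hbe.units_inv_left⟩, rfl⟩

section Cyclic

variable {K V : Type*} [Field K] [AddCommGroup V] [Module K V]

theorem pow_apply_mem_cyc (f : V →ₗ[K] V) (u : V) (i : ℕ) : (f ^ i) u ∈ cyc f u :=
  Submodule.subset_span ⟨i, rfl⟩

theorem cyc_mem_invtSubmodule (f : V →ₗ[K] V) (u : V) :
    cyc f u ∈ Module.End.invtSubmodule f := by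
  refine Submodule.span_le.mpr (Set.range_subset_iff.mpr fun i => ?_)
  simpa [← Module.End.mul_apply, ← pow_succ'] using pow_apply_mem_cyc f u (i + 1)

theorem exists_aeval_apply_of_mem_cyc {f : V →ₗ[K] V} {u v : V} (hv : v ∈ cyc f u) :
    ∃ p : K[X], aeval f p u = v := by
  have hle : cyc f u ≤ LinearMap.range ((LinearMap.applyₗ u).comp (aeval f).toLinearMap) :=
    Submodule.span_le.mpr (Set.range_subset_iff.mpr fun i => ⟨X ^ i, by simp⟩)
  simpa using hle hv

theorem exists_commutes_apply_aeval_eq_of_isCompl (f : V →ₗ[K] V) {U W : Submodule K V}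
    (hUW : IsCompl U W) (hU : U ∈ Module.End.invtSubmodule f)
    (hW : W ∈ Module.End.invtSubmodule f)
    {g h : K[X]} (hg : IsUnit (aeval f g)) (hh : IsUnit (aeval f h)) :
    ∃ α : V ≃ₗ[K] V, Commutes f α ∧
      (∀ y ∈ U, α (aeval f g y) = y) ∧ ∀ z ∈ W, α (aeval f h z) = z := by
  set π := U.projection W hUW
  have hπ : IsIdempotentElem π := Submodule.isIdempotentElem_projection hUW
  have hπf : Commute π f := hπ.commute_iff.mpr
    ⟨by rwa [Submodule.range_projection], by rwa [Submodule.ker_projection]⟩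
  set A := hg.unit
  set B := hh.unit
  have hAπ : Commute (↑A⁻¹ : Module.End K V) π := (hπf.aeval_right g).symm.units_inv_left
  have hBπ : Commute (↑B⁻¹ : Module.End K V) π := (hπf.aeval_right h).symm.units_inv_left
  have hAf : Commute (↑A⁻¹ : Module.End K V) f :=
    ((Commute.refl f).aeval_right g).symm.units_inv_left
  have hBf : Commute (↑B⁻¹ : Module.End K V) f :=
    ((Commute.refl f).aeval_right h).symm.units_inv_left
  obtain ⟨G, hG⟩ := hπ.isUnit_mul_add_mul_one_sub A⁻¹.isUnit B⁻¹.isUnit hAπ hBπ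
  have hGf : Commute (G : Module.End K V) f := by
    rw [hG]
    exact (hAf.mul_left hπf).add_left (hBf.mul_left ((Commute.one_left f).sub_left hπf))
  refine ⟨LinearMap.GeneralLinearGroup.toLinearEquiv G, fun v => LinearMap.congr_fun hGf.eq v,
    fun y hy => ?_, fun z hz => ?_⟩
  · have hπy : π (aeval f g y) = aeval f g y := by
      rw [← Module.End.mul_apply, (hπf.aeval_right g).eq, Module.End.mul_apply,
        Submodule.projection_apply_of_mem_left hUW hy]
    simp only [LinearMap.GeneralLinearGroup.coe_toLinearEquiv, hG, LinearMap.add_apply,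
      Module.End.mul_apply, LinearMap.sub_apply, Module.End.one_apply, hπy, sub_self, map_zero,
      add_zero]
    exact Module.End.isUnit_inv_apply_apply_of_isUnit hg y
  · have hπz : π (aeval f h z) = 0 := by
      rw [← Module.End.mul_apply, (hπf.aeval_right h).eq, Module.End.mul_apply,
        (Submodule.projection_apply_eq_zero_iff hUW).mpr hz, map_zero]
    simp only [LinearMap.GeneralLinearGroup.coe_toLinearEquiv, hG, LinearMap.add_apply,
      Module.End.mul_apply, LinearMap.sub_apply, Module.End.one_apply, hπz, sub_zero, map_zero,
      zero_add]
    exact Module.End.isUnit_inv_apply_apply_of_isUnit hh z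

end Cyclic

theorem stmt9_general {K V : Type*} [Field K] [AddCommGroup V] [Module K V]
    (f : V →ₗ[K] V) (hf : IsNilpotent f)
    (u₁ u₂ : V) (hcompl : IsCompl (cyc f u₁) (cyc f u₂))
    (x : V) :
    ∃ α : V ≃ₗ[K] V, Commutes f α ∧
      ∃ k₁ k₂ : ℕ, α x = (f ^ k₁) u₁ + (f ^ k₂) u₂ := by
  have hx : x ∈ cyc f u₁ ⊔ cyc f u₂ := hcompl.sup_eq_top ▸ Submodule.mem_top
  obtain ⟨x₁, hx₁, x₂, hx₂, rfl⟩ := Submodule.mem_sup.mp hx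
  obtain ⟨p, rfl⟩ := exists_aeval_apply_of_mem_cyc hx₁
  obtain ⟨q, rfl⟩ := exists_aeval_apply_of_mem_cyc hx₂
  obtain ⟨k₁, g, hg, hpg⟩ := exists_aeval_eq_mul_pow hf p
  obtain ⟨k₂, h, hh, hqh⟩ := exists_aeval_eq_mul_pow hf q
  obtain ⟨α, hαf, hα₁, hα₂⟩ := exists_commutes_apply_aeval_eq_of_isCompl f hcompl
    (cyc_mem_invtSubmodule f u₁) (cyc_mem_invtSubmodule f u₂) hg hh
  refine ⟨α, hαf, k₁, k₂, ?_⟩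
  rw [hpg, hqh, Module.End.mul_apply, Module.End.mul_apply, map_add,
    hα₁ _ (pow_apply_mem_cyc f u₁ k₁), hα₂ _ (pow_apply_mem_cyc f u₂ k₂)]

theorem stmt9 {K V : Type*} [Field K] [AddCommGroup V] [Module K V]
    [FiniteDimensional K V] (f : V →ₗ[K] V) (hf : IsNilpotent f)
    (u₁ u₂ : V) (hcompl : IsCompl (cyc f u₁) (cyc f u₂))
    (he : expnt f u₁ < expnt f u₂) (x : V) :
    ∃ α : V ≃ₗ[K] V, Commutes f α ∧
      ∃ k₁ k₂ : ℕ, α x = (f ^ k₁) u₁ + (f ^ k₂) u₂ :=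
  stmt9_general f hf u₁ u₂ hcompl x
end
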